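/- arXiv:2502.19089 — 2 statements merged into one kernel-verified Lean document; each statement's English description precedes it below -/
import Mathlib

section
/- (Upper bound on failure fraction) Let d = 2t+1, and suppose every logical failure caused by a weight-(t+1) error arises from (a) one of L^Z_{2t+1} pure-Z logical operators of weight 2t+1, each admitting at most C(2t+1, t+1) triggering weight-(t+1) patterns of {Z,Y}-type, (b) one of L^X_{2t+1} pure-X logical operators of weight 2t+1, each admitting at most C(2t+1,t+1) triggering patterns of {X,Y}-type, or (c) one of L^X_{2t+2} pure-X logical operators of weight 2t+2, each admitting at most C(2t+2,t+1)/2 triggering patterns of {X,Y}-type. Then with i.i.d. per-qubit error probabilities (p_X, p_Y, p_Z), p = p_X+p_Y+p_Z, the fraction of uncorrected weight-(t+1) patterns satisfies 1 − β_{t+1} ≤ [C(2t+1,t+1) L^Z_{2t+1} ((p_Z+p_Y)/p)^{t+1} + (C(2t+1,t+1) L^X_{2t+1} + C(2t+2,t+1) L^X_{2t+2}/2) ((p_X+p_Y)/p)^{t+1}] / C(n,t+1). -/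
/-- Upper bound on the probability-weighted fraction of uncorrected
weight-`(t+1)` error patterns (Theorem 1 counting bound). Labels in `Fin 4`:
`0 = I`, `1 = X`, `2 = Y`, `3 = Z`. -/
theorem stmt12 (n t : ℕ) (ht : t + 1 ≤ n)
    (pX pY pZ : ℝ) (hX : 0 ≤ pX) (hY : 0 ≤ pY) (hZ : 0 ≤ pZ) (hp : 0 < pX + pY + pZ)
    (LZ LX1 LX2 : ℕ)
    (F FZ FX : Finset (Fin n → Fin 4))
    (prob : Fin 4 → ℝ)
    (hprob : prob = fun l => if l = 1 then pX else if l = 2 then pY else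
      if l = 3 then pZ else 0)
    (hwF : ∀ P ∈ F, (Finset.univ.filter fun i => P i ≠ 0).card = t + 1)
    (hcover : F ⊆ FZ ∪ FX)
    (hZYlab : ∀ P ∈ FZ, ∀ i, P i = 0 ∨ P i = 2 ∨ P i = 3)
    (hXYlab : ∀ P ∈ FX, ∀ i, P i = 0 ∨ P i = 1 ∨ P i = 2)
    (hwFZ : ∀ P ∈ FZ, (Finset.univ.filter fun i => P i ≠ 0).card = t + 1)
    (hwFX : ∀ P ∈ FX, (Finset.univ.filter fun i => P i ≠ 0).card = t + 1)
    (hcZ : FZ.card ≤ (2 * t + 1).choose (t + 1) * LZ)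
    (hcX : 2 * FX.card ≤
      2 * ((2 * t + 1).choose (t + 1) * LX1) + (2 * t + 2).choose (t + 1) * LX2) :
    (∑ P ∈ F, ∏ i ∈ Finset.univ.filter (fun i => P i ≠ 0), prob (P i))
        / ((n.choose (t + 1) : ℝ) * (pX + pY + pZ) ^ (t + 1))
      ≤ (((2 * t + 1).choose (t + 1) : ℝ) * LZ *
            ((pZ + pY) / (pX + pY + pZ)) ^ (t + 1)
          + (((2 * t + 1).choose (t + 1) : ℝ) * LX1
              + ((2 * t + 2).choose (t + 1) : ℝ) * LX2 / 2) *
            ((pX + pY) / (pX + pY + pZ)) ^ (t + 1))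
        / (n.choose (t + 1) : ℝ) := by
  subst hprob
  set f : (Fin n → Fin 4) → ℝ := fun P =>
    ∏ i ∈ Finset.univ.filter (fun i => P i ≠ 0),
      (fun l => if l = 1 then pX else if l = 2 then pY else if l = 3 then pZ else 0) (P i)
    with hf
  have hCpos : (0:ℝ) < n.choose (t+1) := by exact_mod_cast Nat.choose_pos ht
  have hpk : (0:ℝ) < (pX + pY + pZ) ^ (t+1) := pow_pos hp _
  have hnonneg : ∀ P : Fin n → Fin 4, 0 ≤ f P := by
    intro P
    apply Finset.prod_nonneg
    intro i _
    dsimp only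
    split_ifs <;> first | exact hX | exact hY | exact hZ | exact le_refl 0
  have hbZ : ∀ P ∈ FZ, f P ≤ (pZ + pY) ^ (t+1) := by
    intro P hP
    rw [hf]
    dsimp only
    rw [← hwFZ P hP, ← Finset.prod_const]
    apply Finset.prod_le_prod
    · intro i _
      split_ifs <;> first | exact hX | exact hY | exact hZ | exact le_refl 0
    · intro i hi
      simp only [Finset.mem_filter] at hi
      rcases hZYlab P hP i with h | h | h
      · exact absurd h hi.2
      · simp [h]; linarith
      · simp [h]; linarith
  have hbX : ∀ P ∈ FX, f P ≤ (pX + pY) ^ (t+1) := by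
    intro P hP
    rw [hf]
    dsimp only
    rw [← hwFX P hP, ← Finset.prod_const]
    apply Finset.prod_le_prod
    · intro i _
      split_ifs <;> first | exact hX | exact hY | exact hZ | exact le_refl 0
    · intro i hi
      simp only [Finset.mem_filter] at hi
      rcases hXYlab P hP i with h | h | h
      · exact absurd h hi.2
      · simp [h]; linarith
      · simp [h]; linarith
  have hS : ∑ P ∈ F, f P ≤ (FZ.card : ℝ) * (pZ + pY) ^ (t+1)
      + (FX.card : ℝ) * (pX + pY) ^ (t+1) := by
    calc ∑ P ∈ F, f P ≤ ∑ P ∈ FZ ∪ FX, f P :=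
          Finset.sum_le_sum_of_subset_of_nonneg hcover (fun P _ _ => hnonneg P)
      _ ≤ ∑ P ∈ FZ, f P + ∑ P ∈ FX, f P := by
          have := Finset.sum_union_inter (s₁ := FZ) (s₂ := FX) (f := f)
          have h0 : 0 ≤ ∑ P ∈ FZ ∩ FX, f P :=
            Finset.sum_nonneg fun P _ => hnonneg P
          linarith
      _ ≤ (FZ.card : ℝ) * (pZ + pY) ^ (t+1) + (FX.card : ℝ) * (pX + pY) ^ (t+1) := by
          gcongr
          · calc ∑ P ∈ FZ, f P ≤ FZ.card • ((pZ + pY) ^ (t+1)) :=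
                  Finset.sum_le_card_nsmul _ _ _ hbZ
              _ = (FZ.card : ℝ) * (pZ + pY) ^ (t+1) := by simp [nsmul_eq_mul]
          · calc ∑ P ∈ FX, f P ≤ FX.card • ((pX + pY) ^ (t+1)) :=
                  Finset.sum_le_card_nsmul _ _ _ hbX
              _ = (FX.card : ℝ) * (pX + pY) ^ (t+1) := by simp [nsmul_eq_mul]
  have hcZ' : (FZ.card : ℝ) ≤ ((2*t+1).choose (t+1) : ℝ) * LZ := by exact_mod_cast hcZ
  have hcX' : (FX.card : ℝ) ≤ ((2*t+1).choose (t+1) : ℝ) * LX1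
      + ((2*t+2).choose (t+1) : ℝ) * LX2 / 2 := by
    have : (2 * FX.card : ℝ) ≤ 2 * (((2*t+1).choose (t+1) : ℝ) * LX1)
        + ((2*t+2).choose (t+1) : ℝ) * LX2 := by exact_mod_cast hcX
    linarith
  have hq1 : (0:ℝ) ≤ (pZ + pY) ^ (t+1) := by positivity
  have hq2 : (0:ℝ) ≤ (pX + pY) ^ (t+1) := by positivity
  have key : ∑ P ∈ F, f P ≤ ((2*t+1).choose (t+1) : ℝ) * LZ * (pZ + pY) ^ (t+1)
      + (((2*t+1).choose (t+1) : ℝ) * LX1 + ((2*t+2).choose (t+1) : ℝ) * LX2 / 2)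
        * (pX + pY) ^ (t+1) := by
    have h1 := mul_le_mul_of_nonneg_right hcZ' hq1
    have h2 := mul_le_mul_of_nonneg_right hcX' hq2
    linarith
  have hrw : (((2 * t + 1).choose (t + 1) : ℝ) * LZ *
            ((pZ + pY) / (pX + pY + pZ)) ^ (t + 1)
          + (((2 * t + 1).choose (t + 1) : ℝ) * LX1
              + ((2 * t + 2).choose (t + 1) : ℝ) * LX2 / 2) *
            ((pX + pY) / (pX + pY + pZ)) ^ (t + 1))
        / (n.choose (t + 1) : ℝ)
      = (((2*t+1).choose (t+1) : ℝ) * LZ * (pZ + pY) ^ (t+1)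
          + (((2*t+1).choose (t+1) : ℝ) * LX1 + ((2*t+2).choose (t+1) : ℝ) * LX2 / 2)
            * (pX + pY) ^ (t+1))
        / ((n.choose (t+1) : ℝ) * (pX + pY + pZ) ^ (t+1)) := by
    rw [div_pow, div_pow]
    field_simp
  rw [hrw]
  gcongr
end

section
/- (Asymmetric channel bound) Under the hypotheses of the previous counting bound, if the channel has p_X = p_Y and asymmetry A = 2p_Z/(p − p_Z), then (p_Z+p_Y)/p = (A+1)/(A+2) and (p_X+p_Y)/p = 2/(A+2); hence the leading-order logical error rate satisfies p_L ≤ [(A+1)^{t+1} C(2t+1,t+1) L^Z_{2t+1} + 2^{t+1}(C(2t+1,t+1) L^X_{2t+1} + C(2t+2,t+1) L^X_{2t+2}/2)] · p^{t+1} / (A+2)^{t+1}. -/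
/-- Asymmetric channel bound (Corollary 1): with `p_X = p_Y` and
`A = 2p_Z/(p − p_Z)` one has `(p_Z+p_Y)/p = (A+1)/(A+2)`,
`(p_X+p_Y)/p = 2/(A+2)`, and substituting into the counting bound for
`1 − β_{t+1}` yields the displayed bound on the leading-order logical error
rate `p_L = (1 − β) C(n,t+1) p^{t+1}`. -/
theorem stmt13 (n t : ℕ) (pX pY pZ : ℝ)
    (hX : 0 < pX) (hZ : 0 < pZ) (hXY : pX = pY) :
    (pZ + pY) / (pX + pY + pZ)
        = (2 * pZ / ((pX + pY + pZ) - pZ) + 1) / (2 * pZ / ((pX + pY + pZ) - pZ) + 2) ∧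
    (pX + pY) / (pX + pY + pZ) = 2 / (2 * pZ / ((pX + pY + pZ) - pZ) + 2) ∧
    ∀ (LZ LX1 LX2 : ℕ) (β pL : ℝ),
      1 - β ≤ (((2 * t + 1).choose (t + 1) : ℝ) * LZ *
            ((pZ + pY) / (pX + pY + pZ)) ^ (t + 1)
          + (((2 * t + 1).choose (t + 1) : ℝ) * LX1
              + ((2 * t + 2).choose (t + 1) : ℝ) * LX2 / 2) *
            ((pX + pY) / (pX + pY + pZ)) ^ (t + 1)) / (n.choose (t + 1) : ℝ) →
      pL = (1 - β) * (n.choose (t + 1) : ℝ) * (pX + pY + pZ) ^ (t + 1) →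
      pL ≤ ((2 * pZ / ((pX + pY + pZ) - pZ) + 1) ^ (t + 1) *
              (((2 * t + 1).choose (t + 1) : ℝ) * LZ)
            + 2 ^ (t + 1) * (((2 * t + 1).choose (t + 1) : ℝ) * LX1
                + ((2 * t + 2).choose (t + 1) : ℝ) * LX2 / 2))
          * (pX + pY + pZ) ^ (t + 1)
          / (2 * pZ / ((pX + pY + pZ) - pZ) + 2) ^ (t + 1) := by
  subst hXY
  have hp : (0:ℝ) < pX + pX + pZ := by linarith
  have hd : (0:ℝ) < (pX + pX + pZ) - pZ := by linarith
  have hA : (0:ℝ) < 2 * pZ / ((pX + pX + pZ) - pZ) := by positivity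
  have hA2 : (0:ℝ) < 2 * pZ / ((pX + pX + pZ) - pZ) + 2 := by linarith
  have e1 : (pZ + pX) / (pX + pX + pZ)
      = (2 * pZ / ((pX + pX + pZ) - pZ) + 1) / (2 * pZ / ((pX + pX + pZ) - pZ) + 2) := by
    rw [div_eq_div_iff hp.ne' hA2.ne']
    field_simp
    ring
  have e2 : (pX + pX) / (pX + pX + pZ) = 2 / (2 * pZ / ((pX + pX + pZ) - pZ) + 2) := by
    rw [div_eq_div_iff hp.ne' hA2.ne']
    field_simp
    ring
  refine ⟨e1, e2, ?_⟩
  intro LZ LX1 LX2 β pL hβ hpL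
  set A := 2 * pZ / ((pX + pX + pZ) - pZ) with hAdef
  have hppow : (0:ℝ) < (pX + pX + pZ) ^ (t + 1) := by positivity
  rcases Nat.eq_zero_or_pos (n.choose (t + 1)) with hc | hc
  · rw [hc] at hβ hpL
    have h0 : pL ≤ 0 := by
      rw [hpL]; norm_num
    refine h0.trans ?_
    apply div_nonneg
    apply mul_nonneg
    apply add_nonneg
    · exact mul_nonneg (pow_nonneg (by linarith) _) (by positivity)
    · positivity
    · positivity
    · positivity
  · have hC : (0:ℝ) < (n.choose (t + 1) : ℝ) := by exact_mod_cast hc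
    rw [hpL]
    have key : (1 - β) * (n.choose (t + 1) : ℝ)
        ≤ ((A + 1) ^ (t + 1) * (((2 * t + 1).choose (t + 1) : ℝ) * LZ)
            + 2 ^ (t + 1) * (((2 * t + 1).choose (t + 1) : ℝ) * LX1
                + ((2 * t + 2).choose (t + 1) : ℝ) * LX2 / 2)) / (A + 2) ^ (t + 1) := by
      have := mul_le_mul_of_nonneg_right hβ hC.le
      rw [div_mul_cancel₀ _ hC.ne'] at this
      refine this.trans_eq ?_
      rw [e1, e2, div_pow, div_pow]
      field_simp
    calc (1 - β) * (n.choose (t + 1) : ℝ) * (pX + pX + pZ) ^ (t + 1)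
        ≤ _ := mul_le_mul_of_nonneg_right key hppow.le
      _ = _ := by rw [div_mul_eq_mul_div]
end
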